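/- The deterministic strong reset PA recognizable languages are not closed under union: with L = {c*aⁿc*bⁿ | n > 0}^ω and L_{c=∞} = {α | α contains infinitely many c's}, both L and L_{c=∞} are deterministic strong reset PA recognizable, but L ∪ L_{c=∞} is not. -/

import Mathlib

/-! Common definitions: semi-linear sets, Parikh automata on finite and infinite words. -/

/-- The linear set with base vector `b` and finite set `P` of period vectors. -/
def LinSet {d : ℕ} {M : Type} [AddCommMonoid M] (b : Fin d → M)
    (P : Finset (Fin d → M)) : Set (Fin d → M) :=
  {v | ∃ z : (Fin d → M) → ℕ, v = b + ∑ p ∈ P, z p • p}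

/-- A set is semi-linear if it is a finite union of linear sets. -/
def SemiLin {d : ℕ} {M : Type} [AddCommMonoid M] (S : Set (Fin d → M)) : Prop :=
  ∃ (n : ℕ) (b : Fin n → Fin d → M) (P : Fin n → Finset (Fin d → M)),
    S = ⋃ i, LinSet (b i) (P i)

/-- The length-`n` prefix of an infinite word. -/
def pref {S : Type} (α : ℕ → S) (n : ℕ) : List S := List.ofFn fun i : Fin n => α i.1

/-- An infinite word is ultimately periodic if it has the form `u v^ω`. -/
def UltimatelyPeriodic {S : Type} (α : ℕ → S) : Prop :=
  ∃ n p, 0 < p ∧ ∀ i, n ≤ i → α (i + p) = α i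

/-- The finite infix `α[m+1 : n]` (0-indexed positions `m, …, n-1`). -/
def infixSeg {S : Type} (α : ℕ → S) (m n : ℕ) : List S :=
  List.ofFn fun j : Fin (n - m) => α (m + j.1)

/-- `W^ω`: infinite concatenations of non-empty words from `W`. -/
def omegaPow {S : Type} (W : Set (List S)) : Set (ℕ → S) :=
  {α | ∃ k : ℕ → ℕ, k 0 = 0 ∧ StrictMono k ∧ ∀ i, infixSeg α (k i) (k (i + 1)) ∈ W}

/-- A deterministic Parikh automaton with states `Q`, alphabet `S`, dimension `d`,
and a constraint set `C` of vectors over `M` (`M = ℕ`, or `M = ℕ∞` for limit PA). -/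
structure DetPA (Q S : Type) (d : ℕ) (M : Type) where
  init : Q
  trans : Q → S → (Fin d → ℕ) × Q
  acc : Q → Prop
  C : Set (Fin d → M)

namespace DetPA

variable {Q S M : Type} {d : ℕ}

/-- The run of `A` from state `p` on the infinite word `α`: state after `i` letters. -/
def run (A : DetPA Q S d M) (p : Q) (α : ℕ → S) : ℕ → Q
  | 0 => p
  | i + 1 => (A.trans (A.run p α i) (α i)).2

/-- The state of the unique run of `A` on `α` after `i` letters. -/
def stateAt (A : DetPA Q S d M) (α : ℕ → S) : ℕ → Q := A.run A.init α

/-- The vector of the `i`-th transition of the unique run of `A` on `α`. -/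
def step (A : DetPA Q S d M) (α : ℕ → S) (i : ℕ) : Fin d → ℕ :=
  (A.trans (A.stateAt α i) (α i)).1

/-- Sum of transition vectors of the run of `A` on `α` on positions `m, …, n-1`. -/
def vecSum (A : DetPA Q S d M) (α : ℕ → S) (m n : ℕ) : Fin d → ℕ :=
  ∑ i ∈ Finset.Ico m n, A.step α i

/-- The state reached when reading a finite word from state `p`. -/
def runList (A : DetPA Q S d M) : Q → List S → Q
  | p, [] => p
  | p, a :: w => A.runList (A.trans p a).2 w

/-- The sum of transition vectors collected when reading a finite word from state `p`. -/
def sumList (A : DetPA Q S d M) : Q → List S → (Fin d → ℕ)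
  | _, [] => 0
  | p, a :: w => (A.trans p a).1 + A.sumList (A.trans p a).2 w

/-- Finite-word acceptance: end in an accepting state with vector sum in `C`. -/
def AcceptsWord (A : DetPA Q S d ℕ) (w : List S) : Prop :=
  A.acc (A.runList A.init w) ∧ A.sumList A.init w ∈ A.C

/-- The run visits accepting states infinitely often. -/
def InfAcc (A : DetPA Q S d M) (α : ℕ → S) : Prop :=
  ∀ n, ∃ i, n ≤ i ∧ A.acc (A.stateAt α i)

/-- Reachability condition. -/
def ReachAccept (A : DetPA Q S d ℕ) (α : ℕ → S) : Prop :=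
  ∃ i, 1 ≤ i ∧ A.acc (A.stateAt α i) ∧ A.vecSum α 0 i ∈ A.C

/-- Reachability-regular condition. -/
def ReachRegAccept (A : DetPA Q S d ℕ) (α : ℕ → S) : Prop :=
  A.ReachAccept α ∧ A.InfAcc α

/-- Büchi condition. -/
def BuchiAccept (A : DetPA Q S d ℕ) (α : ℕ → S) : Prop :=
  ∀ n, ∃ i, n ≤ i ∧ 1 ≤ i ∧ A.acc (A.stateAt α i) ∧ A.vecSum α 0 i ∈ A.C

/-- Weak reset condition. -/
def WeakResetAccept (A : DetPA Q S d ℕ) (α : ℕ → S) : Prop :=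
  ∃ k : ℕ → ℕ, k 0 = 0 ∧ StrictMono k ∧
    (∀ i, A.acc (A.stateAt α (k (i + 1)))) ∧
    (∀ i, A.vecSum α (k i) (k (i + 1)) ∈ A.C)

/-- Strong reset condition: accepting states occur infinitely often, and between any
two consecutive accepting positions (and from position `0` to the first one) the
collected vector lies in `C`. -/
def StrongResetAccept (A : DetPA Q S d ℕ) (α : ℕ → S) : Prop :=
  (∀ n, ∃ i, n ≤ i ∧ 1 ≤ i ∧ A.acc (A.stateAt α i)) ∧
  ∀ m n, m < n → (m = 0 ∨ (1 ≤ m ∧ A.acc (A.stateAt α m))) →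
    A.acc (A.stateAt α n) →
    (∀ j, m < j → j < n → ¬ A.acc (A.stateAt α j)) →
    A.vecSum α m n ∈ A.C

/-- The extended Parikh image of the unique run of `A` on `α`: componentwise the
supremum in `ℕ∞` of the partial sums (`∞` iff the component is incremented
infinitely often, else the finite total sum). -/
noncomputable def limImage (A : DetPA Q S d M) (α : ℕ → S) : Fin d → ℕ∞ :=
  fun j => ⨆ n, (A.vecSum α 0 n j : ℕ∞)

/-- Limit condition. -/
def LimitAccept (A : DetPA Q S d ℕ∞) (α : ℕ → S) : Prop :=
  A.InfAcc α ∧ A.limImage α ∈ A.C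

end DetPA

/-- `U` is recognized by a deterministic finite-word Parikh automaton. -/
def DetPARecogFin {S : Type} (U : Set (List S)) : Prop :=
  ∃ (d : ℕ) (Q : Type) (_ : Finite Q) (A : DetPA Q S d ℕ),
    SemiLin A.C ∧ U = {w | A.AcceptsWord w}

/-- `L` is recognized by a deterministic reachability PA. -/
def DetReachRecog {S : Type} (L : Set (ℕ → S)) : Prop :=
  ∃ (d : ℕ) (Q : Type) (_ : Finite Q) (A : DetPA Q S d ℕ),
    SemiLin A.C ∧ L = {α | A.ReachAccept α}

/-- `L` is recognized by a deterministic reachability-regular PA. -/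
def DetReachRegRecog {S : Type} (L : Set (ℕ → S)) : Prop :=
  ∃ (d : ℕ) (Q : Type) (_ : Finite Q) (A : DetPA Q S d ℕ),
    SemiLin A.C ∧ L = {α | A.ReachRegAccept α}

/-- `L` is recognized by a deterministic Büchi PA. -/
def DetBuchiRecog {S : Type} (L : Set (ℕ → S)) : Prop :=
  ∃ (d : ℕ) (Q : Type) (_ : Finite Q) (A : DetPA Q S d ℕ),
    SemiLin A.C ∧ L = {α | A.BuchiAccept α}

/-- `L` is recognized by a deterministic weak reset PA. -/
def DetWeakResetRecog {S : Type} (L : Set (ℕ → S)) : Prop :=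
  ∃ (d : ℕ) (Q : Type) (_ : Finite Q) (A : DetPA Q S d ℕ),
    SemiLin A.C ∧ L = {α | A.WeakResetAccept α}

/-- `L` is recognized by a deterministic strong reset PA. -/
def DetStrongResetRecog {S : Type} (L : Set (ℕ → S)) : Prop :=
  ∃ (d : ℕ) (Q : Type) (_ : Finite Q) (A : DetPA Q S d ℕ),
    SemiLin A.C ∧ L = {α | A.StrongResetAccept α}

/-- `L` is recognized by a deterministic limit PA (constraint set over `ℕ∞`). -/
def DetLimitRecog {S : Type} (L : Set (ℕ → S)) : Prop :=
  ∃ (d : ℕ) (Q : Type) (_ : Finite Q) (A : DetPA Q S d ℕ∞),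
    SemiLin A.C ∧ L = {α | A.LimitAccept α}

/-- A nondeterministic Parikh automaton. -/
structure NPA (Q S : Type) (d : ℕ) where
  init : Q
  trans : Q → S → (Fin d → ℕ) → Q → Prop
  acc : Q → Prop
  C : Set (Fin d → ℕ)

namespace NPA

variable {Q S : Type} {d : ℕ}

/-- `r, v` form a run of `A` on the infinite word `α`. -/
def IsRun (A : NPA Q S d) (α : ℕ → S) (r : ℕ → Q) (v : ℕ → Fin d → ℕ) : Prop :=
  r 0 = A.init ∧ ∀ i, A.trans (r i) (α i) (v i) (r (i + 1))

/-- Partial sums of the vectors of a run over positions `m, …, n-1`. -/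
def partSum (v : ℕ → Fin d → ℕ) (m n : ℕ) : Fin d → ℕ := ∑ i ∈ Finset.Ico m n, v i

/-- Nondeterministic reachability-regular acceptance. -/
def ReachRegAccept (A : NPA Q S d) (α : ℕ → S) : Prop :=
  ∃ r v, A.IsRun α r v ∧ (∃ i, 1 ≤ i ∧ A.acc (r i) ∧ partSum v 0 i ∈ A.C) ∧
    ∀ n, ∃ i, n ≤ i ∧ A.acc (r i)

/-- Nondeterministic strong reset acceptance. -/
def StrongResetAccept (A : NPA Q S d) (α : ℕ → S) : Prop :=
  ∃ r v, A.IsRun α r v ∧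
    (∀ n, ∃ i, n ≤ i ∧ 1 ≤ i ∧ A.acc (r i)) ∧
    ∀ m n, m < n → (m = 0 ∨ (1 ≤ m ∧ A.acc (r m))) → A.acc (r n) →
      (∀ j, m < j → j < n → ¬ A.acc (r j)) → partSum v m n ∈ A.C

/-- Nondeterministic weak reset acceptance. -/
def WeakResetAccept (A : NPA Q S d) (α : ℕ → S) : Prop :=
  ∃ r v, A.IsRun α r v ∧ ∃ k : ℕ → ℕ, k 0 = 0 ∧ StrictMono k ∧
    (∀ i, A.acc (r (k (i + 1)))) ∧ (∀ i, partSum v (k i) (k (i + 1)) ∈ A.C)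

/-- Runs of a nondeterministic PA on a finite word, from state `p` to state `q`
collecting vector sum `v`. -/
def ListRun (A : NPA Q S d) : Q → List S → (Fin d → ℕ) → Q → Prop
  | p, [], v, q => q = p ∧ v = 0
  | p, a :: w, v, q => ∃ u p', A.trans p a u p' ∧ ∃ v', A.ListRun p' w v' q ∧ v = u + v'

/-- Finite-word acceptance for a nondeterministic PA. -/
def AcceptsWord (A : NPA Q S d) (w : List S) : Prop :=
  ∃ v q, A.ListRun A.init w v q ∧ A.acc q ∧ v ∈ A.C

end NPA

/-- `L` is recognized by a (nondeterministic) reachability-regular PA. -/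
def NPAReachRegRecog {S : Type} (L : Set (ℕ → S)) : Prop :=
  ∃ (d : ℕ) (Q : Type) (_ : Finite Q) (A : NPA Q S d),
    SemiLin A.C ∧ L = {α | A.ReachRegAccept α}

/-- `L` is recognized by a (nondeterministic) strong reset PA. -/
def NPAStrongResetRecog {S : Type} (L : Set (ℕ → S)) : Prop :=
  ∃ (d : ℕ) (Q : Type) (_ : Finite Q) (A : NPA Q S d),
    SemiLin A.C ∧ L = {α | A.StrongResetAccept α}

/-- `L` is recognized by a (nondeterministic) weak reset PA. -/
def NPAWeakResetRecog {S : Type} (L : Set (ℕ → S)) : Prop :=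
  ∃ (d : ℕ) (Q : Type) (_ : Finite Q) (A : NPA Q S d),
    SemiLin A.C ∧ L = {α | A.WeakResetAccept α}

/-- A nondeterministic Büchi automaton. -/
structure NBA (Q S : Type) where
  init : Q
  trans : Q → S → Q → Prop
  acc : Q → Prop

/-- Büchi acceptance. -/
def NBA.Accepts {Q S : Type} (B : NBA Q S) (α : ℕ → S) : Prop :=
  ∃ r : ℕ → Q, r 0 = B.init ∧ (∀ i, B.trans (r i) (α i) (r (i + 1))) ∧
    ∀ n, ∃ i, n ≤ i ∧ B.acc (r i)

/-- `L` is ω-regular: recognized by a nondeterministic Büchi automaton. -/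
def OmegaRegular {S : Type} (L : Set (ℕ → S)) : Prop :=
  ∃ (Q : Type) (_ : Finite Q) (B : NBA Q S), L = {α | B.Accepts α}

/-- The finite-word language `{c* aⁿ c* bⁿ | n > 0}` over `{a,b,c} = Fin 3`
(`a := 0`, `b := 1`, `c := 2`). -/
def W15 : Set (List (Fin 3)) :=
  {w | ∃ n i j, 0 < n ∧
    w = List.replicate i 2 ++ List.replicate n 0 ++ List.replicate j 2 ++ List.replicate n 1}

/-- `L_{c=∞}`: infinitely many `c`'s. -/
def LcInf : Set (ℕ → Fin 3) := {α | ∀ m, ∃ i, m ≤ i ∧ α i = 2}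
section Generic

namespace DetPA

variable {Q S M : Type} {d : ℕ} (A : DetPA Q S d M)

lemma stateAt_succ (α : ℕ → S) (i : ℕ) :
    A.stateAt α (i + 1) = (A.trans (A.stateAt α i) (α i)).2 := rfl

lemma step_def (α : ℕ → S) (i : ℕ) :
    A.step α i = (A.trans (A.stateAt α i) (α i)).1 := rfl

lemma stateAt_congr {α β : ℕ → S} {N : ℕ} (h : ∀ i < N, α i = β i) :
    ∀ i ≤ N, A.stateAt α i = A.stateAt β i := by
  intro i hi
  induction i with
  | zero => rfl
  | succ n ih =>
    rw [stateAt_succ, stateAt_succ, ih (by omega), h n (by omega)]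

lemma step_congr {α β : ℕ → S} {N : ℕ} (h : ∀ i < N, α i = β i) :
    ∀ i < N, A.step α i = A.step β i := by
  intro i hi
  rw [step_def, step_def, A.stateAt_congr h i (by omega), h i hi]

lemma stateAt_shift {α β : ℕ → S} {N M' : ℕ} (hs : A.stateAt α N = A.stateAt β M')
    (h : ∀ j, α (N + j) = β (M' + j)) :
    ∀ j, A.stateAt α (N + j) = A.stateAt β (M' + j) := by
  intro j
  induction j with
  | zero => simpa using hs
  | succ n ih =>
    have e1 : N + (n + 1) = (N + n) + 1 := by omega
    have e2 : M' + (n + 1) = (M' + n) + 1 := by omega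
    rw [e1, e2, stateAt_succ, stateAt_succ, ih, h n]

lemma step_shift {α β : ℕ → S} {N M' : ℕ} (hs : A.stateAt α N = A.stateAt β M')
    (h : ∀ j, α (N + j) = β (M' + j)) :
    ∀ j, A.step α (N + j) = A.step β (M' + j) := by
  intro j
  rw [step_def, step_def, A.stateAt_shift hs h j, h j]

lemma vecSum_congr {α β : ℕ → S} {x y N : ℕ} (hy : y ≤ N)
    (h : ∀ i < N, A.step α i = A.step β i) :
    A.vecSum α x y = A.vecSum β x y := by
  unfold vecSum
  refine Finset.sum_congr rfl fun i hi => ?_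
  exact h i (by simp [Finset.mem_Ico] at hi; omega)

lemma vecSum_shift {α β : ℕ → S} {N M' : ℕ}
    (h : ∀ j, A.step α (N + j) = A.step β (M' + j)) (j0 j1 : ℕ) :
    A.vecSum α (N + j0) (N + j1) = A.vecSum β (M' + j0) (M' + j1) := by
  induction j1 with
  | zero =>
    unfold vecSum
    rw [Finset.Ico_eq_empty (by omega), Finset.Ico_eq_empty (by omega)]
    simp
  | succ n ih =>
    by_cases hle : j0 ≤ n
    · have e1 : N + (n + 1) = (N + n) + 1 := by omega
      have e2 : M' + (n + 1) = (M' + n) + 1 := by omega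
      unfold vecSum at *
      rw [e1, e2, Finset.sum_Ico_succ_top (by omega), Finset.sum_Ico_succ_top (by omega),
        ih, h n]
    · unfold vecSum
      rw [Finset.Ico_eq_empty (by omega), Finset.Ico_eq_empty (by omega)]
      simp

lemma vecSum_split (α : ℕ → S) {x y z : ℕ} (h1 : x ≤ y) (h2 : y ≤ z) :
    A.vecSum α x z = A.vecSum α x y + A.vecSum α y z := by
  unfold vecSum
  rw [← Finset.sum_Ico_consecutive _ h1 h2]

end DetPA

/-- splitting an infix -/
lemma infixSeg_append {S : Type} (α : ℕ → S) {x y z : ℕ} (h1 : x ≤ y) (h2 : y ≤ z) :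
    infixSeg α x z = infixSeg α x y ++ infixSeg α y z := by
  unfold infixSeg
  have hz : z - x = (y - x) + (z - y) := by omega
  rw [hz, List.ofFn_add]
  have e1 : (List.ofFn fun j : Fin (y - x) => α (x + (Fin.castAdd (z-y) j).1)) =
      List.ofFn fun j : Fin (y - x) => α (x + j.1) :=
    congrArg List.ofFn (funext fun i => by simp)
  have e2 : (List.ofFn fun j : Fin (z - y) => α (x + (Fin.natAdd (y-x) j).1)) =
      List.ofFn fun j : Fin (z - y) => α (y + j.1) :=
    congrArg List.ofFn (funext fun i => by
      simp only [Fin.coe_natAdd]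
      exact congrArg α (by omega))
  rw [← e1, ← e2]
  rfl

lemma infixSeg_const {S : Type} (α : ℕ → S) {x y : ℕ} (ch : S)
    (h : ∀ j, x ≤ j → j < y → α j = ch) :
    infixSeg α x y = List.replicate (y - x) ch := by
  unfold infixSeg
  rw [show (List.replicate (y-x) ch) = List.ofFn (fun _ : Fin (y-x) => ch) by
    simp [List.ofFn_const]]
  refine congrArg List.ofFn (funext fun i => ?_)
  exact h _ (by omega) (by omega)

lemma infixSeg_length {S : Type} (α : ℕ → S) (x y : ℕ) :
    (infixSeg α x y).length = y - x := by simp [infixSeg]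

lemma infixSeg_getElem {S : Type} (α : ℕ → S) (x y o : ℕ) (h : o < y - x) :
    (infixSeg α x y)[o]'(by rw [infixSeg_length]; exact h) = α (x + o) := by
  simp [infixSeg]

end Generic
section W15facts

lemma infixSeg_getElem? {S : Type} (α : ℕ → S) (x y o : ℕ) :
    (infixSeg α x y)[o]? = if o < y - x then some (α (x + o)) else none := by
  split
  · rename_i h
    rw [List.getElem?_eq_getElem (by rw [infixSeg_length]; exact h)]
    rw [infixSeg_getElem α x y o h]
  · exact List.getElem?_eq_none (by rw [infixSeg_length]; omega)

lemma quad_getElem? (i n j m o : ℕ) :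
    (List.replicate i (2 : Fin 3) ++ List.replicate n 0 ++
      List.replicate j 2 ++ List.replicate m 1)[o]? =
    if o < i then some 2 else if o < i + n then some 0 else
      if o < i + n + j then some 2 else if o < i + n + j + m then some 1 else none := by
  by_cases h3 : o < i + n + j
  · rw [List.getElem?_append_left (by simp; omega)]
    by_cases h2 : o < i + n
    · rw [List.getElem?_append_left (by simp; omega)]
      by_cases h1 : o < i
      · rw [List.getElem?_append_left (by simp; omega), List.getElem?_replicate]
        try simp only [List.length_append, List.length_replicate]
        split_ifs <;> first | rfl | (exfalso; omega)
      · rw [List.getElem?_append_right (by simp; omega), List.getElem?_replicate]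
        try simp only [List.length_append, List.length_replicate]
        split_ifs <;> first | rfl | (exfalso; omega)
    · rw [List.getElem?_append_right (by simp; omega), List.getElem?_replicate]
      try simp only [List.length_append, List.length_replicate]
      split_ifs <;> first | rfl | (exfalso; omega)
  · rw [List.getElem?_append_right (by simp; omega), List.getElem?_replicate]
    try simp only [List.length_append, List.length_replicate]
    split_ifs <;> first | rfl | (exfalso; omega)

lemma mem_W15_iff (α : ℕ → Fin 3) (x y : ℕ) (hxy : x ≤ y) :
    infixSeg α x y ∈ W15 ↔ ∃ n i j, 0 < n ∧ y = x + (i + n + j + n) ∧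
      (∀ o < i, α (x + o) = 2) ∧ (∀ o < n, α (x + i + o) = 0) ∧
      (∀ o < j, α (x + i + n + o) = 2) ∧ (∀ o < n, α (x + i + n + j + o) = 1) := by
  constructor
  · rintro ⟨n, i, j, hn, hw⟩
    have hlen : y - x = i + n + j + n := by
      have h := congrArg List.length hw
      rw [infixSeg_length] at h
      try simp only [List.length_append, List.length_replicate] at h
      omega
    have key : ∀ o < y - x, some (α (x + o)) =
        (if o < i then some 2 else if o < i + n then some 0 else
          if o < i + n + j then some 2 else if o < i + n + j + n then some (1 : Fin 3)
            else none) := by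
      intro o ho
      have hq := quad_getElem? i n j n o
      rw [← hw, infixSeg_getElem?, if_pos ho] at hq
      exact hq
    refine ⟨n, i, j, hn, by omega, ?_, ?_, ?_, ?_⟩
    · intro o ho
      have h := key o (by omega)
      rw [if_pos ho] at h
      exact Option.some.inj h
    · intro o ho
      have h := key (i + o) (by omega)
      rw [if_neg (by omega), if_pos (by omega)] at h
      rw [show x + i + o = x + (i + o) by omega]
      exact Option.some.inj h
    · intro o ho
      have h := key (i + n + o) (by omega)
      rw [if_neg (by omega), if_neg (by omega), if_pos (by omega)] at h
      rw [show x + i + n + o = x + (i + n + o) by omega]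
      exact Option.some.inj h
    · intro o ho
      have h := key (i + n + j + o) (by omega)
      rw [if_neg (by omega), if_neg (by omega), if_neg (by omega), if_pos (by omega)] at h
      rw [show x + i + n + j + o = x + (i + n + j + o) by omega]
      exact Option.some.inj h
  · rintro ⟨n, i, j, hn, hy, h1, h2, h3, h4⟩
    refine ⟨n, i, j, hn, ?_⟩
    have e1 : infixSeg α x (x + i) = List.replicate i 2 := by
      rw [infixSeg_const α 2 (fun t ht1 ht2 => by
        have := h1 (t - x) (by omega); rwa [show x + (t - x) = t by omega] at this)]
      congr 1; omega
    have e2 : infixSeg α (x + i) (x + i + n) = List.replicate n 0 := by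
      rw [infixSeg_const α 0 (fun t ht1 ht2 => by
        have := h2 (t - (x + i)) (by omega)
        rwa [show x + i + (t - (x + i)) = t by omega] at this)]
      congr 1; omega
    have e3 : infixSeg α (x + i + n) (x + i + n + j) = List.replicate j 2 := by
      rw [infixSeg_const α 2 (fun t ht1 ht2 => by
        have := h3 (t - (x + i + n)) (by omega)
        rwa [show x + i + n + (t - (x + i + n)) = t by omega] at this)]
      congr 1; omega
    have e4 : infixSeg α (x + i + n + j) y = List.replicate n 1 := by
      rw [infixSeg_const α 1 (fun t ht1 ht2 => by
        have := h4 (t - (x + i + n + j)) (by omega)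
        rwa [show x + i + n + j + (t - (x + i + n + j)) = t by omega] at this)]
      congr 1; omega
    rw [infixSeg_append α (by omega : x ≤ x + i) (by omega : x + i ≤ y),
      infixSeg_append α (by omega : x + i ≤ x + i + n) (by omega : x + i + n ≤ y),
      infixSeg_append α (by omega : x + i + n ≤ x + i + n + j) (by omega : x + i + n + j ≤ y),
      e1, e2, e3, e4]
    simp [List.append_assoc]

end W15facts
section LcPart

/-- The 2-state automaton recognizing `L_{c=∞}`. -/
def AC : DetPA Bool (Fin 3) 0 ℕ where
  init := false
  trans := fun _ s => (0, s = 2)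
  acc := fun q => q = true
  C := Set.univ

lemma semiLin_univ_fin0 : SemiLin (Set.univ : Set (Fin 0 → ℕ)) := by
  refine ⟨1, fun _ => 0, fun _ => ∅, ?_⟩
  ext v
  simp only [Set.mem_univ, Set.mem_iUnion, true_iff]
  exact ⟨0, ⟨fun _ => 0, by simp; funext i; exact absurd i.2 (by omega)⟩⟩

lemma AC_stateAt (α : ℕ → Fin 3) (i : ℕ) :
    AC.stateAt α (i + 1) = decide (α i = 2) := rfl

lemma lc_recog : DetStrongResetRecog LcInf := by
  refine ⟨0, Bool, Finite.of_fintype Bool, AC, semiLin_univ_fin0, ?_⟩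
  ext α
  simp only [Set.mem_setOf_eq]
  constructor
  · intro hα
    constructor
    · intro n
      obtain ⟨i, hi, hc⟩ := hα n
      refine ⟨i + 1, by omega, by omega, ?_⟩
      show AC.stateAt α (i + 1) = true
      rw [AC_stateAt, hc]
      simp
    · intro m n _ _ _ _
      exact Set.mem_univ _
  · rintro ⟨h1, _⟩
    intro m
    obtain ⟨i, hi, h1i, hacc⟩ := h1 (m + 1)
    obtain ⟨j, rfl⟩ : ∃ j, i = j + 1 := ⟨i - 1, by omega⟩
    have : decide (α j = 2) = true := by rw [← AC_stateAt]; exact hacc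
    exact ⟨j, by omega, by simpa using this⟩

end LcPart
section L15

/-- States of the automaton for `{c* a^n c* b^n}^ω`. -/
inductive Q15 : Type
  | st_p | st_a | st_q | st_b | st_fa | st_fc | st_d
deriving DecidableEq

instance : Fintype Q15 where
  elems := ⟨↑[Q15.st_p, Q15.st_a, Q15.st_q, Q15.st_b, Q15.st_fa, Q15.st_fc, Q15.st_d], by decide⟩
  complete := fun x => by cases x <;> decide

open Q15

/-- unit vectors -/
def ea : Fin 2 → ℕ := ![1, 0]
def eb : Fin 2 → ℕ := ![0, 1]

/-- The automaton: counts `a`s in coordinate 0 and `b`s in coordinate 1 of each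
block (shifted by one), with accepting states `fa`, `fc` right after a block ends. -/
def A15 : DetPA Q15 (Fin 3) 2 ℕ where
  init := st_p
  trans := fun s => match s with
    | st_p => ![(ea, st_a), (0, st_d), (0, st_p)]
    | st_a => ![(ea, st_a), (eb, st_b), (0, st_q)]
    | st_q => ![(0, st_d), (eb, st_b), (0, st_q)]
    | st_b => ![(0, st_fa), (eb, st_b), (0, st_fc)]
    | st_fa => ![(ea + ea, st_a), (ea + eb, st_b), (ea, st_q)]
    | st_fc => ![(ea, st_a), (0, st_d), (0, st_p)]
    | st_d => ![(0, st_d), (0, st_d), (0, st_d)]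
  acc := fun s => s = st_fa ∨ s = st_fc
  C := {v | v 0 = v 1 ∧ 1 ≤ v 0}

/-- phase of a state -/
def phase : Q15 → ℕ
  | st_p => 0 | st_fc => 0 | st_a => 1 | st_fa => 1 | st_q => 2 | st_b => 3 | st_d => 4

/-- the letter that must have been read to enter a state -/
def ltrOf : Q15 → Fin 3
  | st_p => 2 | st_fc => 2 | st_q => 2 | st_a => 0 | st_fa => 0 | st_b => 1 | st_d => 0

/-- standard letter vector -/
def stdv : Fin 3 → (Fin 2 → ℕ) := ![ea, eb, 0]

lemma F_letter : ∀ (s : Q15) (l : Fin 3), (A15.trans s l).2 ≠ st_d →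
    l = ltrOf ((A15.trans s l).2) := by decide

lemma F_phase : ∀ (s : Q15) (l : Fin 3), s ≠ st_d → (A15.trans s l).2 ≠ st_d →
    (A15.trans s l).2 = st_fa ∨ (A15.trans s l).2 = st_fc ∨
      phase s ≤ phase ((A15.trans s l).2) := by decide

lemma F_intoF : ∀ (s : Q15) (l : Fin 3),
    ((A15.trans s l).2 = st_fa ∨ (A15.trans s l).2 = st_fc) → s = st_b := by decide

lemma F_dead : ∀ l : Fin 3, (A15.trans st_d l).2 = st_d := by decide

lemma F_vec : ∀ (s : Q15) (l : Fin 3), s ≠ st_d → (A15.trans s l).2 ≠ st_d →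
    (A15.trans s l).1 + (if (A15.trans s l).2 = st_fa then ea else 0) =
      stdv l + (if s = st_fa then ea else 0) := by decide

lemma F_ltrphase : ∀ s : Q15, s ≠ st_d → ltrOf s =
    (if phase s = 0 then 2 else if phase s = 1 then 0 else
      if phase s = 2 then 2 else 1) := by decide

lemma F_phase_le : ∀ s : Q15, s ≠ st_d → phase s ≤ 3 := by decide

lemma F_acc_iff : ∀ s : Q15, A15.acc s ↔ (s = st_fa ∨ s = st_fc) := fun _ => Iff.rfl

lemma semiLin_C15 : SemiLin A15.C := by
  refine ⟨1, fun _ => ![1, 1], fun _ => {![1, 1]}, ?_⟩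
  ext v
  simp only [Set.mem_iUnion]
  constructor
  · intro hv
    obtain ⟨h01, h1⟩ := hv
    refine ⟨0, fun _ => v 0 - 1, ?_⟩
    rw [Finset.sum_singleton]
    funext i
    fin_cases i <;>
      simp [Matrix.cons_val_zero, Matrix.cons_val_one, Pi.add_apply, Pi.smul_apply] <;>
      omega
  · rintro ⟨_, z, hz⟩
    rw [Finset.sum_singleton] at hz
    constructor
    · rw [hz]
      simp [Pi.add_apply, Pi.smul_apply]
    · rw [hz]
      simp [Pi.add_apply, Pi.smul_apply]

end L15
section L15dir1

open Q15

/-- expected state at offset `o` in block `i` (block shape `c^I a^N c^J b^N`). -/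
def ESb (i I N J o : ℕ) : Q15 :=
  if o = 0 then (if i = 0 then st_p else st_b)
  else if i ≠ 0 ∧ o = 1 then (if I = 0 then st_fa else st_fc)
  else if o - 1 < I then st_p
  else if o - 1 < I + N then st_a
  else if o - 1 < I + N + J then st_q
  else st_b

/-- expected letter at offset `o`. -/
def ltrb (I N J o : ℕ) : Fin 3 :=
  if o < I then 2 else if o < I + N then 0 else if o < I + N + J then 2 else 1

/-- expected step vector at offset `o`. -/
def svb (i I N J o : ℕ) : Fin 2 → ℕ :=
  if o = 0 ∧ i ≠ 0 then 0
  else (if i ≠ 0 ∧ o = 1 ∧ I = 0 then ea else 0) +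
    (if o < I then 0 else if o < I + N then ea else if o < I + N + J then 0 else eb)

lemma TRb (i I N J o : ℕ) (hN : 1 ≤ N) (ho : o < I + N + J + N) :
    A15.trans (ESb i I N J o) (ltrb I N J o) = (svb i I N J o, ESb i I N J (o + 1)) := by
  unfold ESb ltrb svb
  simp only [Nat.add_sub_cancel, Nat.succ_ne_zero, if_false, Nat.succ.injEq]
  by_cases hi : i = 0 <;>
    simp only [hi, ne_eq, not_true_eq_false, false_and, and_false, if_false,
      not_false_eq_true, true_and, and_true] <;>
    split_ifs <;> first | rfl | decide | (exfalso; omega)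

lemma svb_base_sumA (I N J b a : ℕ) (ha : a ≤ I) (hb : b = I + N + J + N) :
    ∑ o ∈ Finset.Ico a b,
      (if o < I then (0 : Fin 2 → ℕ) else if o < I + N then ea else
        if o < I + N + J then 0 else eb) = N • ea + N • eb := by
  rw [← Finset.sum_Ico_consecutive _ (by omega : a ≤ I) (by omega : I ≤ b),
    ← Finset.sum_Ico_consecutive _ (by omega : I ≤ I + N) (by omega : I + N ≤ b),
    ← Finset.sum_Ico_consecutive _ (by omega : I + N ≤ I + N + J) (by omega : I + N + J ≤ b)]
  have e0 : ∑ o ∈ Finset.Ico a I,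
      (if o < I then (0 : Fin 2 → ℕ) else if o < I + N then ea else
        if o < I + N + J then 0 else eb) = 0 := by
    apply Finset.sum_eq_zero
    intro o ho
    simp only [Finset.mem_Ico] at ho
    rw [if_pos (by omega)]
  have e1 : ∑ o ∈ Finset.Ico I (I + N),
      (if o < I then (0 : Fin 2 → ℕ) else if o < I + N then ea else
        if o < I + N + J then 0 else eb) = N • ea := by
    have hc : ∀ o ∈ Finset.Ico I (I + N),
        (if o < I then (0 : Fin 2 → ℕ) else if o < I + N then ea else
          if o < I + N + J then 0 else eb) = ea := by
      intro o ho
      simp only [Finset.mem_Ico] at ho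
      rw [if_neg (by omega), if_pos (by omega)]
    rw [Finset.sum_congr rfl hc, Finset.sum_const, Nat.card_Ico, Nat.add_sub_cancel_left]
  have e2 : ∑ o ∈ Finset.Ico (I + N) (I + N + J),
      (if o < I then (0 : Fin 2 → ℕ) else if o < I + N then ea else
        if o < I + N + J then 0 else eb) = 0 := by
    apply Finset.sum_eq_zero
    intro o ho
    simp only [Finset.mem_Ico] at ho
    rw [if_neg (by omega), if_neg (by omega), if_pos (by omega)]
  have e3 : ∑ o ∈ Finset.Ico (I + N + J) b,
      (if o < I then (0 : Fin 2 → ℕ) else if o < I + N then ea else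
        if o < I + N + J then 0 else eb) = N • eb := by
    have hc : ∀ o ∈ Finset.Ico (I + N + J) b,
        (if o < I then (0 : Fin 2 → ℕ) else if o < I + N then ea else
          if o < I + N + J then 0 else eb) = eb := by
      intro o ho
      simp only [Finset.mem_Ico] at ho
      rw [if_neg (by omega), if_neg (by omega), if_neg (by omega)]
    rw [Finset.sum_congr rfl hc, Finset.sum_const, Nat.card_Ico,
      show b - (I + N + J) = N by omega]
  rw [e0, e1, e2, e3]
  abel

lemma svb_base_sumB (N J b : ℕ) (hN : 1 ≤ N) (hb : b = 0 + N + J + N) :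
    ∑ o ∈ Finset.Ico 1 b,
      (if o < 0 then (0 : Fin 2 → ℕ) else if o < 0 + N then ea else
        if o < 0 + N + J then 0 else eb) = (N - 1) • ea + N • eb := by
  rw [← Finset.sum_Ico_consecutive _ (by omega : 1 ≤ 0 + N) (by omega : 0 + N ≤ b),
    ← Finset.sum_Ico_consecutive _ (by omega : 0 + N ≤ 0 + N + J) (by omega : 0 + N + J ≤ b)]
  have e1 : ∑ o ∈ Finset.Ico 1 (0 + N),
      (if o < 0 then (0 : Fin 2 → ℕ) else if o < 0 + N then ea else
        if o < 0 + N + J then 0 else eb) = (N - 1) • ea := by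
    have hc : ∀ o ∈ Finset.Ico 1 (0 + N),
        (if o < 0 then (0 : Fin 2 → ℕ) else if o < 0 + N then ea else
          if o < 0 + N + J then 0 else eb) = ea := by
      intro o ho
      simp only [Finset.mem_Ico] at ho
      rw [if_neg (by omega), if_pos (by omega)]
    rw [Finset.sum_congr rfl hc, Finset.sum_const, Nat.card_Ico, show 0 + N - 1 = N - 1 by omega]
  have e2 : ∑ o ∈ Finset.Ico (0 + N) (0 + N + J),
      (if o < 0 then (0 : Fin 2 → ℕ) else if o < 0 + N then ea else
        if o < 0 + N + J then 0 else eb) = 0 := by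
    apply Finset.sum_eq_zero
    intro o ho
    simp only [Finset.mem_Ico] at ho
    rw [if_neg (by omega), if_neg (by omega), if_pos (by omega)]
  have e3 : ∑ o ∈ Finset.Ico (0 + N + J) b,
      (if o < 0 then (0 : Fin 2 → ℕ) else if o < 0 + N then ea else
        if o < 0 + N + J then 0 else eb) = N • eb := by
    have hc : ∀ o ∈ Finset.Ico (0 + N + J) b,
        (if o < 0 then (0 : Fin 2 → ℕ) else if o < 0 + N then ea else
          if o < 0 + N + J then 0 else eb) = eb := by
      intro o ho
      simp only [Finset.mem_Ico] at ho
      rw [if_neg (by omega), if_neg (by omega), if_neg (by omega)]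
    rw [Finset.sum_congr rfl hc, Finset.sum_const, Nat.card_Ico,
      show b - (0 + N + J) = N by omega]
  rw [e1, e2, e3]
  abel

lemma svb_sum0 (I N J : ℕ) (hN : 1 ≤ N) :
    ∑ o ∈ Finset.Ico 0 (I + N + J + N), svb 0 I N J o = N • ea + N • eb := by
  have hc : ∀ o ∈ Finset.Ico 0 (I + N + J + N), svb 0 I N J o =
      (if o < I then (0 : Fin 2 → ℕ) else if o < I + N then ea else
        if o < I + N + J then 0 else eb) := by
    intro o _
    unfold svb
    rw [if_neg (by omega), if_neg (by omega), zero_add]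
  rw [Finset.sum_congr rfl hc, svb_base_sumA I N J _ 0 (by omega) rfl]

lemma svb_sum1 (i I N J : ℕ) (hi : 1 ≤ i) (hN : 1 ≤ N) :
    ∑ o ∈ Finset.Ico 1 (I + N + J + N), svb i I N J o = N • ea + N • eb := by
  rcases Nat.eq_zero_or_pos I with hI | hI
  · subst hI
    have hc : ∀ o ∈ Finset.Ico 1 (0 + N + J + N), svb i 0 N J o =
        (if o = 1 then ea else 0) +
        (if o < 0 then (0 : Fin 2 → ℕ) else if o < 0 + N then ea else
          if o < 0 + N + J then 0 else eb) := by
      intro o ho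
      simp only [Finset.mem_Ico] at ho
      unfold svb
      rw [if_neg (by omega)]
      congr 1
      by_cases h1 : o = 1
      · rw [if_pos h1, if_pos (by refine ⟨by omega, h1, rfl⟩)]
      · rw [if_neg h1, if_neg (by rintro ⟨_, h, _⟩; exact h1 h)]
    rw [Finset.sum_congr rfl hc, Finset.sum_add_distrib, svb_base_sumB N J _ hN rfl]
    have ec : ∑ o ∈ Finset.Ico 1 (0 + N + J + N), (if o = 1 then ea else (0 : Fin 2 → ℕ)) =
        ea := by
      rw [Finset.sum_eq_single_of_mem 1 (by simp [Finset.mem_Ico]; omega)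
        (fun o _ ho => by rw [if_neg ho]), if_pos rfl]
    have hN' : N • ea = (N - 1) • ea + ea := by
      nth_rewrite 1 [show N = (N - 1) + 1 by omega]
      rw [succ_nsmul]
    rw [ec, hN']
    abel
  · have hc : ∀ o ∈ Finset.Ico 1 (I + N + J + N), svb i I N J o =
        (if o < I then (0 : Fin 2 → ℕ) else if o < I + N then ea else
          if o < I + N + J then 0 else eb) := by
      intro o ho
      simp only [Finset.mem_Ico] at ho
      unfold svb
      rw [if_neg (by omega), if_neg (by rintro ⟨_, _, h⟩; omega), zero_add]
    rw [Finset.sum_congr rfl hc, svb_base_sumA I N J _ 1 (by omega) rfl]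

end L15dir1
section L15dir2

open Q15

lemma sum_Ico_shift (f : ℕ → (Fin 2 → ℕ)) (a b : ℕ) :
    ∑ u ∈ Finset.Ico a b, f (u + 1) = ∑ u ∈ Finset.Ico (a + 1) (b + 1), f u := by
  rcases le_or_gt a b with h | h
  · induction b with
    | zero =>
      have : a = 0 := by omega
      subst this
      simp
    | succ b ih =>
      rcases le_or_gt a b with h2 | h2
      · rw [Finset.sum_Ico_succ_top h2, Finset.sum_Ico_succ_top (show a + 1 ≤ b + 1 by omega),
          ih h2]
      · have : a = b + 1 := by omega
        subst this
        simp
  · rw [Finset.Ico_eq_empty (by omega), Finset.Ico_eq_empty (by omega)]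
    simp

lemma no_dead {α : ℕ → Fin 3} (hInf : ∀ n, ∃ i, n ≤ i ∧ 1 ≤ i ∧ A15.acc (A15.stateAt α i)) :
    ∀ u, A15.stateAt α u ≠ st_d := by
  intro u hu
  have hall : ∀ v, A15.stateAt α (u + v) = st_d := by
    intro v
    induction v with
    | zero => simpa using hu
    | succ w ih =>
      rw [show u + (w + 1) = (u + w) + 1 by omega, A15.stateAt_succ, ih, F_dead]
  obtain ⟨i, hi, _, hacc⟩ := hInf u
  rw [show i = u + (i - u) by omega, hall (i - u)] at hacc
  rcases hacc with h | h <;> exact absurd h (by decide)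

lemma seg_block (α : ℕ → Fin 3) (M T : ℕ) (hMT : M < T)
    (hnd : ∀ u, A15.stateAt α u ≠ st_d)
    (hM : M = 0 ∨ (1 ≤ M ∧ A15.acc (A15.stateAt α M)))
    (hT : A15.acc (A15.stateAt α T))
    (hbet : ∀ u, M < u → u < T → ¬ A15.acc (A15.stateAt α u))
    (hC : A15.vecSum α M T ∈ A15.C) :
    infixSeg α (M - 1) (T - 1) ∈ W15 := by
  classical
  have hinit : A15.stateAt α 0 = st_p := rfl
  -- T ≥ 2
  have hT2 : 2 ≤ T := by
    by_contra hT2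
    have hT1 : T = 1 := by omega
    subst hT1
    have h' : (A15.trans (A15.stateAt α 0) (α 0)).2 = st_fa ∨
        (A15.trans (A15.stateAt α 0) (α 0)).2 = st_fc := hT
    have := F_intoF _ _ h'
    rw [hinit] at this
    exact absurd this (by decide)
  set M' := max M 1 with hM'def
  have hM'1 : 1 ≤ M' := le_max_right _ _
  have hM'M : M ≤ M' := le_max_left _ _
  have hM'cases : (1 ≤ M ∧ M' = M) ∨ (M = 0 ∧ M' = 1) := by
    rcases Nat.eq_zero_or_pos M with h | h
    · right
      refine ⟨by omega, by rw [hM'def]; omega⟩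
    · left
      refine ⟨by omega, by rw [hM'def]; omega⟩
  have hM'T : M' < T := by rcases hM'cases with ⟨_, h⟩ | ⟨_, h⟩ <;> omega
  set len := T - M' with hlendef
  have hlen1 : 1 ≤ len := by omega
  set ψ : ℕ → ℕ := fun o => phase (A15.stateAt α (M' + o)) with hψdef
  -- entry phase
  have hψ0 : ψ 0 ≤ 1 := by
    show phase (A15.stateAt α (M' + 0)) ≤ 1
    rcases hM'cases with ⟨hm1, hm2⟩ | ⟨hm1, hm2⟩
    · rw [hm2, Nat.add_zero]
      rcases hM with h | ⟨_, hacc⟩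
      · omega
      · rcases hacc with h | h <;> rw [h] <;> decide
    · rw [hm2]
      have h1 : A15.stateAt α (1 + 0) = (A15.trans (A15.stateAt α 0) (α 0)).2 := rfl
      rw [h1, hinit]
      have hnd1 : (A15.trans st_p (α 0)).2 ≠ st_d := by
        rw [← hinit]
        exact hnd 1
      revert hnd1
      have h3 : α 0 = 0 ∨ α 0 = 1 ∨ α 0 = 2 := by omega
      rcases h3 with h | h | h <;> rw [h] <;> decide
  -- non-accepting inside
  have hnacc : ∀ u, M < u → u < T → ¬ (A15.stateAt α u = st_fa ∨ A15.stateAt α u = st_fc) :=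
    fun u h1 h2 => hbet u h1 h2
  -- monotonicity of ψ
  have hmono1 : ∀ o, M' + o + 1 < T → ψ o ≤ ψ (o + 1) := by
    intro o ho
    have hstep : A15.stateAt α (M' + o + 1) =
        (A15.trans (A15.stateAt α (M' + o)) (α (M' + o))).2 := rfl
    have := F_phase (A15.stateAt α (M' + o)) (α (M' + o)) (hnd _) (by rw [← hstep]; exact hnd _)
    rcases this with h | h | h
    · exact absurd (Or.inl (by rw [hstep]; exact h)) (hnacc (M' + o + 1) (by omega) (by omega))
    · exact absurd (Or.inr (by rw [hstep]; exact h)) (hnacc (M' + o + 1) (by omega) (by omega))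
    · show ψ o ≤ phase (A15.stateAt α (M' + (o + 1)))
      rw [show M' + (o + 1) = M' + o + 1 by omega, hstep]
      exact h
  have hmono : ∀ o o', o ≤ o' → M' + o' < T → ψ o ≤ ψ o' := by
    intro o o' hoo' ho'
    induction o' with
    | zero => simpa [show o = 0 by omega] using le_rfl
    | succ w ih =>
      rcases Nat.lt_or_ge o (w + 1) with h | h
      · exact le_trans (ih (by omega) (by omega)) (hmono1 w (by omega))
      · have : o = w + 1 := by omega
        subst this
        exact le_rfl
  have hψle : ∀ o, ψ o ≤ 3 := fun o => F_phase_le _ (hnd _)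
  -- thresholds
  have hex1 : ∃ o, o = len ∨ 1 ≤ ψ o := ⟨len, Or.inl rfl⟩
  have hex2 : ∃ o, o = len ∨ 2 ≤ ψ o := ⟨len, Or.inl rfl⟩
  have hex3 : ∃ o, o = len ∨ 3 ≤ ψ o := ⟨len, Or.inl rfl⟩
  set T1 := Nat.find hex1 with hT1def
  set T2 := Nat.find hex2 with hT2def
  set T3 := Nat.find hex3 with hT3def
  have hT1len : T1 ≤ len := Nat.find_le (Or.inl rfl)
  have hT2len : T2 ≤ len := Nat.find_le (Or.inl rfl)
  have hT3len : T3 ≤ len := Nat.find_le (Or.inl rfl)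
  have hT12 : T1 ≤ T2 := Nat.find_mono (fun n h => by
    rcases h with h | h
    · exact Or.inl h
    · exact Or.inr (by omega))
  have hT23 : T2 ≤ T3 := Nat.find_mono (fun n h => by
    rcases h with h | h
    · exact Or.inl h
    · exact Or.inr (by omega))
  have hz1 : ∀ o < T1, ψ o = 0 := by
    intro o ho
    have := Nat.find_min hex1 ho
    push_neg at this
    omega
  have hz2 : ∀ o, T1 ≤ o → o < T2 → ψ o = 1 := by
    intro o h1 h2
    have hup := Nat.find_min hex2 h2
    push_neg at hup
    have hlo : 1 ≤ ψ o := by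
      have hs := Nat.find_spec hex1
      rcases hs with h | h
      · omega
      · exact le_trans h (hmono T1 o h1 (by omega))
    omega
  have hz3 : ∀ o, T2 ≤ o → o < T3 → ψ o = 2 := by
    intro o h1 h2
    have hup := Nat.find_min hex3 h2
    push_neg at hup
    have hlo : 2 ≤ ψ o := by
      have hs := Nat.find_spec hex2
      rcases hs with h | h
      · omega
      · exact le_trans h (hmono T2 o h1 (by omega))
    omega
  have hz4 : ∀ o, T3 ≤ o → o < len → ψ o = 3 := by
    intro o h1 h2
    have hlo : 3 ≤ ψ o := by
      have hs := Nat.find_spec hex3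
      rcases hs with h | h
      · omega
      · exact le_trans h (hmono T3 o h1 (by omega))
    have := hψle o
    omega
  -- letters
  have hltr : ∀ o < len, α (M' - 1 + o) =
      (if ψ o = 0 then 2 else if ψ o = 1 then 0 else if ψ o = 2 then 2 else 1) := by
    intro o ho
    have hidx : M' - 1 + o + 1 = M' + o := by omega
    have hstep : A15.stateAt α (M' - 1 + o + 1) =
        (A15.trans (A15.stateAt α (M' - 1 + o)) (α (M' - 1 + o))).2 := rfl
    have hl := F_letter (A15.stateAt α (M' - 1 + o)) (α (M' - 1 + o))
      (by rw [← hstep, hidx]; exact hnd _)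
    rw [← hstep, hidx] at hl
    rw [hl, F_ltrphase _ (hnd _)]
  -- the vector sum identity
  set F : ℕ → (Fin 2 → ℕ) := fun u => if A15.stateAt α u = st_fa then ea else 0 with hFdef
  set g : ℕ → (Fin 2 → ℕ) := fun o => stdv (α (M' - 1 + o)) with hgdef
  have hgval : ∀ o < len, g o =
      (if ψ o = 0 then 0 else if ψ o = 1 then ea else if ψ o = 2 then 0 else eb) := by
    intro o ho
    show stdv (α (M' - 1 + o)) = _
    rw [hltr o ho]
    rcases Nat.lt_or_ge o T1 with h | h
    · rw [hz1 o h]; decide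
    rcases Nat.lt_or_ge o T2 with h2 | h2
    · rw [hz2 o h h2]; decide
    rcases Nat.lt_or_ge o T3 with h3 | h3
    · rw [hz3 o h2 h3]; decide
    · rw [hz4 o h3 ho]; decide
  -- per-step identity
  have hstepid : ∀ u, A15.step α u + F (u + 1) = stdv (α u) + F u := by
    intro u
    have hstep : A15.stateAt α (u + 1) = (A15.trans (A15.stateAt α u) (α u)).2 := rfl
    have hv := F_vec (A15.stateAt α u) (α u) (hnd u) (by rw [← hstep]; exact hnd _)
    show (A15.trans (A15.stateAt α u) (α u)).1 + _ = _
    rw [hFdef]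
    simp only []
    rw [hstep]
    exact hv
  -- summed identity
  have hsum : A15.vecSum α M T + F T = (∑ u ∈ Finset.Ico M T, stdv (α u)) + F M := by
    have h1 : ∑ u ∈ Finset.Ico M T, (A15.step α u + F (u + 1)) =
        ∑ u ∈ Finset.Ico M T, (stdv (α u) + F u) :=
      Finset.sum_congr rfl fun u _ => hstepid u
    rw [Finset.sum_add_distrib, Finset.sum_add_distrib, sum_Ico_shift,
      Finset.sum_Ico_succ_top (by omega : M + 1 ≤ T),
      Finset.sum_eq_sum_Ico_succ_bot hMT F] at h1
    have e : A15.vecSum α M T = ∑ u ∈ Finset.Ico M T, A15.step α u := rfl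
    have h2 : (A15.vecSum α M T + F T) + ∑ u ∈ Finset.Ico (M + 1) T, F u =
        ((∑ u ∈ Finset.Ico M T, stdv (α u)) + F M) + ∑ u ∈ Finset.Ico (M + 1) T, F u := by
      calc (A15.vecSum α M T + F T) + ∑ u ∈ Finset.Ico (M + 1) T, F u
          = ∑ u ∈ Finset.Ico M T, A15.step α u +
            (∑ u ∈ Finset.Ico (M + 1) T, F u + F T) := by rw [e]; abel
        _ = ∑ u ∈ Finset.Ico M T, stdv (α u) + (F M + ∑ u ∈ Finset.Ico (M + 1) T, F u) := h1
        _ = ((∑ u ∈ Finset.Ico M T, stdv (α u)) + F M) + ∑ u ∈ Finset.Ico (M + 1) T, F u := by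
            abel
    exact add_right_cancel h2
  -- compute sum of g over [0, len)
  set nA := T2 - T1 with hnAdef
  set nB := len - T3 with hnBdef
  have hgsum : ∑ o ∈ Finset.range len, g o = nA • ea + nB • eb := by
    rw [Finset.range_eq_Ico,
      ← Finset.sum_Ico_consecutive _ (by omega : (0:ℕ) ≤ T1) (by omega : T1 ≤ len),
      ← Finset.sum_Ico_consecutive _ (by omega : T1 ≤ T2) (by omega : T2 ≤ len),
      ← Finset.sum_Ico_consecutive _ (by omega : T2 ≤ T3) (by omega : T3 ≤ len)]
    have e1 : ∑ o ∈ Finset.Ico 0 T1, g o = 0 := by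
      apply Finset.sum_eq_zero
      intro o ho
      simp only [Finset.mem_Ico] at ho
      rw [hgval o (by omega), if_pos (hz1 o (by omega))]
    have e2 : ∑ o ∈ Finset.Ico T1 T2, g o = nA • ea := by
      have hcongr : ∀ o ∈ Finset.Ico T1 T2, g o = ea := by
        intro o ho
        simp only [Finset.mem_Ico] at ho
        rw [hgval o (by omega), if_neg (by rw [hz2 o ho.1 ho.2]; omega),
          if_pos (hz2 o ho.1 ho.2)]
      rw [Finset.sum_congr rfl hcongr, Finset.sum_const, Nat.card_Ico]
    have e3 : ∑ o ∈ Finset.Ico T2 T3, g o = 0 := by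
      apply Finset.sum_eq_zero
      intro o ho
      simp only [Finset.mem_Ico] at ho
      rw [hgval o (by omega), if_neg (by rw [hz3 o ho.1 ho.2]; omega),
        if_neg (by rw [hz3 o ho.1 ho.2]; omega), if_pos (hz3 o ho.1 ho.2)]
    have e4 : ∑ o ∈ Finset.Ico T3 len, g o = nB • eb := by
      have hcongr : ∀ o ∈ Finset.Ico T3 len, g o = eb := by
        intro o ho
        simp only [Finset.mem_Ico] at ho
        rw [hgval o (by omega), if_neg (by rw [hz4 o ho.1 ho.2]; omega),
          if_neg (by rw [hz4 o ho.1 ho.2]; omega), if_neg (by rw [hz4 o ho.1 ho.2]; omega)]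
      rw [Finset.sum_congr rfl hcongr, Finset.sum_const, Nat.card_Ico]
    rw [e1, e2, e3, e4]
    simp
  -- F T equals g len
  have hFT : F T = g len := by
    have hidx : M' - 1 + len + 1 = T := by omega
    have hstep : A15.stateAt α (M' - 1 + len + 1) =
        (A15.trans (A15.stateAt α (M' - 1 + len)) (α (M' - 1 + len))).2 := rfl
    have hl := F_letter (A15.stateAt α (M' - 1 + len)) (α (M' - 1 + len))
      (by rw [← hstep, hidx]; exact hnd _)
    rw [← hstep, hidx] at hl
    show (if A15.stateAt α T = st_fa then ea else 0) = stdv (α (M' - 1 + len))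
    rw [hl]
    rcases hT with h | h <;> rw [h] <;> decide
  -- middle sum
  have hmid : (∑ u ∈ Finset.Ico M T, stdv (α u)) + F M =
      (∑ o ∈ Finset.range len, g o) + F T := by
    rcases hM'cases with ⟨hm1, hm2⟩ | ⟨hm1, hm2⟩
    · -- M ≥ 1
      have hre : ∑ u ∈ Finset.Ico M T, stdv (α u) = ∑ o ∈ Finset.range len, g (o + 1) := by
        rw [Finset.sum_Ico_eq_sum_range, show T - M = len by omega]
        refine Finset.sum_congr rfl fun o _ => ?_
        show stdv (α (M + o)) = stdv (α (M' - 1 + (o + 1)))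
        rw [show M' - 1 + (o + 1) = M + o by omega]
      have hFM : F M = g 0 := by
        have hψ0v : ψ 0 = phase (A15.stateAt α M) := by
          show phase (A15.stateAt α (M' + 0)) = _
          rw [Nat.add_zero, hm2]
        rw [hgval 0 (by omega)]
        rcases hM with h | ⟨_, hacc⟩
        · omega
        · rcases hacc with h | h
          · rw [show ψ 0 = 1 by rw [hψ0v, h]; rfl]
            show (if A15.stateAt α M = st_fa then ea else 0) = _
            rw [h]
            decide
          · rw [show ψ 0 = 0 by rw [hψ0v, h]; rfl]
            show (if A15.stateAt α M = st_fa then ea else 0) = _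
            rw [h]
            decide
      rw [hre, hFM, hFT]
      calc (∑ o ∈ Finset.range len, g (o + 1)) + g 0
          = ∑ o ∈ Finset.range (len + 1), g o := (Finset.sum_range_succ' g len).symm
        _ = (∑ o ∈ Finset.range len, g o) + g len := Finset.sum_range_succ g len
    · -- M = 0
      have hFM : F M = 0 := by
        show (if A15.stateAt α M = st_fa then ea else 0) = 0
        rw [hm1, hinit]
        decide
      have hre : ∑ u ∈ Finset.Ico M T, stdv (α u) = ∑ o ∈ Finset.range (len + 1), g o := by
        rw [hm1, Finset.range_eq_Ico, show len + 1 = T by omega]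
        refine Finset.sum_congr rfl fun o _ => ?_
        show stdv (α o) = stdv (α (M' - 1 + o))
        rw [show M' - 1 + o = o by omega]
      rw [hre, hFM, hFT, add_zero, Finset.sum_range_succ g len]
  -- the vector value
  have hvec : A15.vecSum α M T = nA • ea + nB • eb := by
    have h := hsum.trans hmid
    rw [hgsum] at h
    exact add_right_cancel h
  rw [hvec] at hC
  obtain ⟨hc1, hc2⟩ := hC
  have hval0 : (nA • ea + nB • eb) 0 = nA := by simp [ea, eb]
  have hval1 : (nA • ea + nB • eb) 1 = nB := by simp [ea, eb]
  rw [hval0, hval1] at hc1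
  rw [hval0] at hc2
  -- assemble the block
  rw [show M - 1 = M' - 1 by omega]
  rw [mem_W15_iff _ _ _ (by omega)]
  refine ⟨nA, T1, T3 - T2, by omega, by omega, ?_, ?_, ?_, ?_⟩
  · intro o ho
    rw [hltr o (by omega), if_pos (hz1 o ho)]
  · intro o ho
    rw [show M' - 1 + T1 + o = M' - 1 + (T1 + o) by omega, hltr (T1 + o) (by omega),
      if_neg (by rw [hz2 (T1 + o) (by omega) (by omega)]; omega),
      if_pos (hz2 (T1 + o) (by omega) (by omega))]
  · intro o ho
    rw [show M' - 1 + T1 + nA + o = M' - 1 + (T2 + o) by omega, hltr (T2 + o) (by omega),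
      if_neg (by rw [hz3 (T2 + o) (by omega) (by omega)]; omega),
      if_neg (by rw [hz3 (T2 + o) (by omega) (by omega)]; omega),
      if_pos (hz3 (T2 + o) (by omega) (by omega))]
  · intro o ho
    rw [show M' - 1 + T1 + nA + (T3 - T2) + o = M' - 1 + (T3 + o) by omega,
      hltr (T3 + o) (by omega),
      if_neg (by rw [hz4 (T3 + o) (by omega) (by omega)]; omega),
      if_neg (by rw [hz4 (T3 + o) (by omega) (by omega)]; omega),
      if_neg (by rw [hz4 (T3 + o) (by omega) (by omega)]; omega)]

end L15dir2
section L15main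

open Q15

lemma l15_sound (α : ℕ → Fin 3) (hmem : α ∈ omegaPow W15) : A15.StrongResetAccept α := by
  obtain ⟨k, hk0, hkm, hkb⟩ := hmem
  have hmem' := fun i => (mem_W15_iff α (k i) (k (i+1))
    (le_of_lt (hkm (show i < i + 1 by omega)))).mp (hkb i)
  choose N I J hN hlen hc1 ha1 hc2 hb1 using hmem'
  set L : ℕ → ℕ := fun i => I i + N i + J i + N i with hLdef
  have hL2 : ∀ i, 2 ≤ L i := fun i => by have := hN i; show 2 ≤ I i + N i + J i + N i; omega
  have hlen' : ∀ i, k (i+1) = k i + L i := hlen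
  have hLtr : ∀ i o, o < L i → α (k i + o) = ltrb (I i) (N i) (J i) o := by
    intro i o ho
    have ho' : o < I i + N i + J i + N i := ho
    unfold ltrb
    split_ifs with h1 h2 h3
    · exact hc1 i o h1
    · have h := ha1 i (o - I i) (by omega)
      rwa [show k i + I i + (o - I i) = k i + o by omega] at h
    · have h := hc2 i (o - (I i + N i)) (by omega)
      rwa [show k i + I i + N i + (o - (I i + N i)) = k i + o by omega] at h
    · have h := hb1 i (o - (I i + N i + J i)) (by omega)
      rwa [show k i + I i + N i + J i + (o - (I i + N i + J i)) = k i + o by omega] at h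
  have hblockrun : ∀ i, A15.stateAt α (k i) = ESb i (I i) (N i) (J i) 0 →
      ∀ o, o ≤ L i → A15.stateAt α (k i + o) = ESb i (I i) (N i) (J i) o := by
    intro i hent o ho
    induction o with
    | zero => simpa using hent
    | succ w ih =>
      have hw := ih (by omega)
      have hs : A15.stateAt α (k i + (w + 1)) =
          (A15.trans (A15.stateAt α (k i + w)) (α (k i + w))).2 := rfl
      have hLi : L i = I i + N i + J i + N i := rfl
      rw [hs, hw, hLtr i w (by omega), TRb i (I i) (N i) (J i) w (hN i) (by omega)]
  have hstates : ∀ i, A15.stateAt α (k i) = ESb i (I i) (N i) (J i) 0 := by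
    intro i
    induction i with
    | zero =>
      rw [hk0]
      unfold ESb
      rw [if_pos rfl, if_pos rfl]
      rfl
    | succ i ih =>
      have h := hblockrun i ih (L i) le_rfl
      rw [hlen' i, h]
      have hNi := hN i
      have hLi : L i = I i + N i + J i + N i := rfl
      have e1 : ESb i (I i) (N i) (J i) (L i) = st_b := by
        unfold ESb
        split_ifs <;> first | rfl | (exfalso; omega)
      have e2 : ESb (i+1) (I (i+1)) (N (i+1)) (J (i+1)) 0 = st_b := by
        unfold ESb
        rw [if_pos rfl, if_neg (by omega)]
      rw [e1, e2]
  have hST : ∀ i o, o ≤ L i → A15.stateAt α (k i + o) = ESb i (I i) (N i) (J i) o :=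
    fun i => hblockrun i (hstates i)
  have hSTEP : ∀ i o, o < L i → A15.step α (k i + o) = svb i (I i) (N i) (J i) o := by
    intro i o ho
    have hLi : L i = I i + N i + J i + N i := rfl
    have hs : A15.step α (k i + o) =
        (A15.trans (A15.stateAt α (k i + o)) (α (k i + o))).1 := rfl
    rw [hs, hST i o (le_of_lt ho), hLtr i o ho,
      TRb i (I i) (N i) (J i) o (hN i) (by omega)]
  have hrep : ∀ t, ∃ i, k i ≤ t ∧ t < k (i+1) := by
    intro t
    induction t with
    | zero =>
      refine ⟨0, by omega, ?_⟩
      have := hkm (show 0 < 0 + 1 by omega)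
      omega
    | succ t ih =>
      obtain ⟨i, h1, h2⟩ := ih
      rcases Nat.lt_or_ge (t+1) (k (i+1)) with h | h
      · exact ⟨i, by omega, h⟩
      · refine ⟨i+1, by omega, ?_⟩
        have := hkm (show i + 1 < i + 1 + 1 by omega)
        omega
  have hacc_iff : ∀ t, A15.acc (A15.stateAt α t) ↔ ∃ i, 1 ≤ i ∧ t = k i + 1 := by
    intro t
    constructor
    · intro hacc
      obtain ⟨i, h1, h2⟩ := hrep t
      have ho : t - k i ≤ L i := by have := hlen' i; omega
      have hst := hST i (t - k i) ho
      rw [show k i + (t - k i) = t by omega] at hst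
      rw [hst] at hacc
      revert hacc
      unfold ESb
      split_ifs <;> intro hacc <;>
        first
          | (rcases hacc with h | h <;> (try split at h) <;> exact absurd h (by decide))
          | (refine ⟨i, ?_, ?_⟩ <;> omega)
    · rintro ⟨i, hi1, rfl⟩
      have hst := hST i 1 (by have := hL2 i; omega)
      rw [hst]
      unfold ESb
      rw [if_neg (by omega), if_pos ⟨by omega, rfl⟩]
      split_ifs
      · exact Or.inl rfl
      · exact Or.inr rfl
  have hCmem : ∀ n : ℕ, 1 ≤ n → (n • ea + n • eb : Fin 2 → ℕ) ∈ A15.C := by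
    intro n hn
    refine ⟨by simp [ea, eb], by simpa [ea, eb] using hn⟩
  have hlast : ∀ i : ℕ, A15.step α (k i + L i) = 0 := by
    intro i
    have e : k i + L i = k (i+1) + 0 := by have := hlen' i; omega
    rw [e, hSTEP (i+1) 0 (by have := hL2 (i+1); omega)]
    unfold svb
    rw [if_pos ⟨rfl, by omega⟩]
  have hseg1 : ∀ i, 1 ≤ i → A15.vecSum α (k i + 1) (k (i+1) + 1) = N i • ea + N i • eb := by
    intro i hi
    have hv : A15.vecSum α (k i + 1) (k (i+1) + 1) =
        ∑ o ∈ Finset.Ico 1 (L i + 1), A15.step α (k i + o) := by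
      rw [hlen' i]
      unfold DetPA.vecSum
      rw [Finset.sum_Ico_eq_sum_range, Finset.sum_Ico_eq_sum_range,
        show k i + L i + 1 - (k i + 1) = L i by omega, show L i + 1 - 1 = L i by omega]
      refine Finset.sum_congr rfl fun o _ => ?_
      rw [show k i + 1 + o = k i + (1 + o) by omega]
    rw [hv, Finset.sum_Ico_succ_top (by have := hL2 i; omega : 1 ≤ L i), hlast i, add_zero]
    have hc : ∀ o ∈ Finset.Ico 1 (L i), A15.step α (k i + o) = svb i (I i) (N i) (J i) o :=
      fun o ho => hSTEP i o (by simp only [Finset.mem_Ico] at ho; omega)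
    rw [Finset.sum_congr rfl hc]
    exact svb_sum1 i (I i) (N i) (J i) hi (hN i)
  have hseg0 : A15.vecSum α 0 (k 1 + 1) = N 0 • ea + N 0 • eb := by
    have hv : A15.vecSum α 0 (k 1 + 1) = ∑ o ∈ Finset.Ico 0 (L 0 + 1), A15.step α (k 0 + o) := by
      unfold DetPA.vecSum
      rw [show k 1 + 1 = L 0 + 1 by have hh : k 1 = k 0 + L 0 := hlen' 0; omega]
      refine Finset.sum_congr rfl fun o _ => ?_
      rw [show k 0 + o = o by omega]
    rw [hv, Finset.sum_Ico_succ_top (by omega : 0 ≤ L 0), hlast 0, add_zero]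
    have hc : ∀ o ∈ Finset.Ico 0 (L 0), A15.step α (k 0 + o) = svb 0 (I 0) (N 0) (J 0) o :=
      fun o ho => hSTEP 0 o (by simp only [Finset.mem_Ico] at ho; omega)
    rw [Finset.sum_congr rfl hc]
    exact svb_sum0 (I 0) (N 0) (J 0) (hN 0)
  refine ⟨?_, ?_⟩
  · intro n
    refine ⟨k (n+1) + 1, ?_, by omega, (hacc_iff _).mpr ⟨n+1, by omega, rfl⟩⟩
    have : n + 1 ≤ k (n + 1) := hkm.le_apply
    omega
  · intro x y hxy hx hy hbet
    obtain ⟨iy, hiy, hyv⟩ := (hacc_iff y).mp hy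
    rcases hx with rfl | ⟨hx1, haccx⟩
    · have hiy1 : iy = 1 := by
        by_contra hne
        refine hbet (k 1 + 1) ?_ ?_ ((hacc_iff _).mpr ⟨1, le_rfl, rfl⟩)
        · have := hkm (show 0 < 1 by omega)
          omega
        · have := hkm (show 1 < iy by omega)
          omega
      rw [show y = k 1 + 1 by rw [hyv, hiy1], hseg0]
      exact hCmem (N 0) (hN 0)
    · obtain ⟨ix, hix, hxv⟩ := (hacc_iff x).mp haccx
      have hiy2 : iy = ix + 1 := by
        rcases Nat.lt_trichotomy iy (ix + 1) with h | h | h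
        · exfalso
          have hk' : k iy ≤ k ix := hkm.le_iff_le.mpr (by omega)
          omega
        · exact h
        · exfalso
          refine hbet (k (ix+1) + 1) ?_ ?_ ((hacc_iff _).mpr ⟨ix+1, by omega, rfl⟩)
          · have := hkm (show ix < ix + 1 by omega)
            omega
          · have := hkm (show ix+1 < iy by omega)
            omega
      rw [hxv, show y = k (ix+1) + 1 by rw [hyv, hiy2], hseg1 ix hix]
      exact hCmem (N ix) (hN ix)

lemma l15_complete (α : ℕ → Fin 3) (h : A15.StrongResetAccept α) : α ∈ omegaPow W15 := by
  classical
  obtain ⟨hInf, hSeg⟩ := h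
  have hnd := no_dead hInf
  have hex : ∀ n : ℕ, ∃ t, n < t ∧ A15.acc (A15.stateAt α t) := by
    intro n
    obtain ⟨i, hi, _, hacc⟩ := hInf (n+1)
    exact ⟨i, by omega, hacc⟩
  let sq : ℕ → ℕ := fun i => Nat.rec (motive := fun _ => ℕ) 0 (fun _ prev => Nat.find (hex prev)) i
  have hsq0 : sq 0 = 0 := rfl
  have hsqs : ∀ i, sq (i+1) = Nat.find (hex (sq i)) := fun _ => rfl
  have hlt : ∀ i, sq i < sq (i+1) := fun i => (Nat.find_spec (hex (sq i))).1
  have hac : ∀ i, A15.acc (A15.stateAt α (sq (i+1))) := fun i => (Nat.find_spec (hex (sq i))).2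
  have hmin : ∀ i u, sq i < u → u < sq (i+1) → ¬ A15.acc (A15.stateAt α u) := by
    intro i u h1 h2 hacu
    exact Nat.find_min (hex (sq i)) h2 ⟨h1, hacu⟩
  have h1acc : ¬ A15.acc (A15.stateAt α 1) := by
    intro hacc1
    have h' : (A15.trans (A15.stateAt α 0) (α 0)).2 = st_fa ∨
        (A15.trans (A15.stateAt α 0) (α 0)).2 = st_fc := hacc1
    have h2 := F_intoF _ _ h'
    rw [show A15.stateAt α 0 = st_p from rfl] at h2
    exact absurd h2 (by decide)
  have hsq2 : ∀ i, 2 ≤ sq (i + 1) := by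
    intro i
    induction i with
    | zero =>
      have h1 := hlt 0
      rw [hsq0] at h1
      by_contra hcon
      have h2 : sq (0 + 1) = 1 := by omega
      exact h1acc (by rw [← h2]; exact hac 0)
    | succ j ih =>
      have := hlt (j + 1)
      omega
  have hMi : ∀ i, sq i = 0 ∨ (1 ≤ sq i ∧ A15.acc (A15.stateAt α (sq i))) := by
    intro i
    cases i with
    | zero => exact Or.inl hsq0
    | succ j => exact Or.inr ⟨by have := hsq2 j; omega, hac j⟩
  refine ⟨fun i => sq i - 1, by show sq 0 - 1 = 0; rw [hsq0], ?_, ?_⟩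
  · apply strictMono_nat_of_lt_succ
    intro i
    show sq i - 1 < sq (i + 1) - 1
    rcases Nat.eq_zero_or_pos i with hi | hi
    · subst hi
      rw [hsq0]
      have := hsq2 0
      omega
    · have h2 : 2 ≤ sq i := by
        obtain ⟨j, rfl⟩ : ∃ j, i = j + 1 := ⟨i - 1, by omega⟩
        exact hsq2 j
      have := hlt i
      omega
  · intro i
    exact seg_block α (sq i) (sq (i+1)) (hlt i) hnd (hMi i) (hac i) (hmin i)
      (hSeg (sq i) (sq (i+1)) (hlt i) (hMi i) (hac i) (hmin i))

lemma l15_recog : DetStrongResetRecog (omegaPow W15) := by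
  refine ⟨2, Q15, Finite.of_fintype Q15, A15, semiLin_C15, ?_⟩
  ext α
  simp only [Set.mem_setOf_eq]
  exact ⟨fun h => l15_sound α h, fun h => l15_complete α h⟩

end L15main
section NotClosed

/-- the word `a^n b^m c^J (ab)^ω` -/
def wABJ (n m J : ℕ) : ℕ → Fin 3 := fun i =>
  if i < n then 0 else if i < n + m then 1 else if i < n + m + J then 2
  else if (i - (n + m + J)) % 2 = 0 then 0 else 1

/-- the word `a^n b^m c^ω` -/
def wABC (n m : ℕ) : ℕ → Fin 3 := fun i =>
  if i < n then 0 else if i < n + m then 1 else 2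

lemma wABJ_not_LcInf (n m J : ℕ) : wABJ n m J ∉ LcInf := by
  intro h
  obtain ⟨i, hi, hc⟩ := h (n + m + J)
  unfold wABJ at hc
  split_ifs at hc <;> first | (exfalso; omega) | exact absurd hc (by decide)

lemma wABJ_not_L {n m J : ℕ} (hm : 1 ≤ m) (hmn : m < n) (hJ : 1 ≤ J) :
    wABJ n m J ∉ omegaPow W15 := by
  rintro ⟨k, hk0, hkm, hkb⟩
  have hb0 := hkb 0
  rw [hk0] at hb0
  have hk1 : 0 < k 1 := by rw [← hk0]; exact hkm (by omega)
  rw [mem_W15_iff _ _ _ (by omega)] at hb0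
  obtain ⟨N, I, Jj, hN, hlen, p1, p2, p3, p4⟩ := hb0
  -- I = 0
  have hI : I = 0 := by
    by_contra hI
    have h2 := p1 0 (by omega)
    unfold wABJ at h2
    split_ifs at h2 <;> first | (exfalso; omega) | exact absurd h2 (by decide)
  -- N = n
  have hNn : N = n := by
    rcases Nat.lt_trichotomy N n with h | h | h
    · rcases Nat.eq_zero_or_pos Jj with hJj | hJj
      · have h2 := p4 0 (by omega)
        rw [show 0 + I + N + Jj + 0 = N by omega] at h2
        unfold wABJ at h2
        split_ifs at h2 <;> first | (exfalso; omega) | exact absurd h2 (by decide)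
      · have h2 := p3 0 (by omega)
        rw [show 0 + I + N + 0 = N by omega] at h2
        unfold wABJ at h2
        split_ifs at h2 <;> first | (exfalso; omega) | exact absurd h2 (by decide)
    · exact h
    · have h2 := p2 n (by omega)
      rw [show 0 + I + n = n by omega] at h2
      unfold wABJ at h2
      split_ifs at h2 <;> first | (exfalso; omega) | exact absurd h2 (by decide)
  -- Jj = 0
  have hJj : Jj = 0 := by
    by_contra hJj
    have h2 := p3 0 (by omega)
    rw [show 0 + I + N + 0 = n by omega] at h2
    unfold wABJ at h2
    split_ifs at h2 <;> first | (exfalso; omega) | exact absurd h2 (by decide)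
  -- contradiction at position n + m
  have h2 := p4 m (by omega)
  rw [show 0 + I + N + Jj + m = n + m by omega] at h2
  unfold wABJ at h2
  split_ifs at h2 <;> first | (exfalso; omega) | exact absurd h2 (by decide)

lemma not_union_core {d : ℕ} {Q : Type} (A : DetPA Q (Fin 3) d ℕ)
    (hL : omegaPow W15 ∪ LcInf = {α | A.StrongResetAccept α})
    (m n : ℕ) (hm : 1 ≤ m) (hmn : m < n)
    (hst : A.stateAt (fun _ => (0 : Fin 3)) m = A.stateAt (fun _ => (0 : Fin 3)) n) :
    False := by
  set aw : ℕ → Fin 3 := fun _ => 0 with haw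
  set α : ℕ → Fin 3 := wABC n m with hα
  have hα_mem : α ∈ LcInf := by
    intro kk
    refine ⟨max kk (n + m), le_max_left _ _, ?_⟩
    show wABC n m _ = 2
    unfold wABC
    split_ifs <;> first | (exfalso; omega) | rfl
  have hSRAα : A.StrongResetAccept α := (Set.ext_iff.mp hL α).mp (Or.inr hα_mem)
  obtain ⟨hInfα, hSegα⟩ := hSRAα
  obtain ⟨T, hT1, hT2, haccT⟩ := hInfα (n + m + 1)
  set J := T - (n + m) with hJdef
  have hJ : 1 ≤ J := by omega
  have hTval : T = n + m + J := by omega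
  set γc : ℕ → Fin 3 := wABC m m with hγc
  set γ : ℕ → Fin 3 := wABJ m m J with hγ
  set β : ℕ → Fin 3 := wABJ n m J with hβ
  -- word agreements
  have w1 : ∀ i < n + m + J, β i = α i := by
    intro i hi
    show wABJ n m J i = wABC n m i
    unfold wABJ wABC
    split_ifs <;> first | rfl | (exfalso; omega)
  have w2 : ∀ j, α (n + j) = γc (m + j) := by
    intro j
    show wABC n m (n + j) = wABC m m (m + j)
    unfold wABC
    split_ifs <;> first | rfl | (exfalso; omega)
  have w3α : ∀ i < n, α i = aw i := by
    intro i hi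
    show wABC n m i = (0 : Fin 3)
    unfold wABC
    split_ifs <;> first | rfl | (exfalso; omega)
  have w3γ : ∀ i < m, γc i = aw i := by
    intro i hi
    show wABC m m i = (0 : Fin 3)
    unfold wABC
    split_ifs <;> first | rfl | (exfalso; omega)
  have w4 : ∀ i < m + m + J, γ i = γc i := by
    intro i hi
    show wABJ m m J i = wABC m m i
    unfold wABJ wABC
    split_ifs <;> first | rfl | (exfalso; omega)
  have w5 : ∀ j, β (n + m + J + j) = γ (m + m + J + j) := by
    intro j
    show wABJ n m J (n + m + J + j) = wABJ m m J (m + m + J + j)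
    unfold wABJ
    rw [show n + m + J + j - (n + m + J) = j by omega] 
    rw [show m + m + J + j - (m + m + J) = j by omega]
    split_ifs <;> first | rfl | (exfalso; omega)
  -- state agreements
  have s1 : A.stateAt α n = A.stateAt γc m := by
    rw [A.stateAt_congr w3α n le_rfl, A.stateAt_congr w3γ m le_rfl, hst]
  have s2 : ∀ j, A.stateAt α (n + j) = A.stateAt γc (m + j) := A.stateAt_shift s1 w2
  have s3 : ∀ i ≤ m + m + J, A.stateAt γ i = A.stateAt γc i := A.stateAt_congr w4
  have sβα : ∀ i ≤ n + m + J, A.stateAt β i = A.stateAt α i := A.stateAt_congr w1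
  have stβα : ∀ i < n + m + J, A.step β i = A.step α i := A.step_congr w1
  have s4 : A.stateAt β (n + m + J) = A.stateAt γ (m + m + J) := by
    rw [sβα _ le_rfl, show n + m + J = n + (m + J) by omega, s2,
      show m + (m + J) = m + m + J by omega, s3 _ le_rfl]
  have s5 : ∀ j, A.stateAt β (n + m + J + j) = A.stateAt γ (m + m + J + j) :=
    A.stateAt_shift s4 w5
  have st5 : ∀ j, A.step β (n + m + J + j) = A.step γ (m + m + J + j) :=
    A.step_shift s4 w5
  -- γ ∈ omegaPow W15
  have hγmem : γ ∈ omegaPow W15 := by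
    refine ⟨fun i => match i with
      | 0 => 0
      | 1 => 2 * m
      | (i + 2) => 2 * m + J + 2 * (i + 1),
      rfl, strictMono_nat_of_lt_succ fun i => ?_, fun i => ?_⟩
    · match i with
      | 0 => show (0 : ℕ) < 2 * m; omega
      | 1 => show 2 * m < 2 * m + J + 2 * (0 + 1); omega
      | (i + 2) => show 2 * m + J + 2 * (i + 1) < 2 * m + J + 2 * (i + 1 + 1); omega
    · match i with
      | 0 =>
        show infixSeg γ 0 (2 * m) ∈ W15
        rw [mem_W15_iff _ _ _ (by omega)]
        refine ⟨m, 0, 0, hm, by omega, fun o ho => absurd ho (by omega), ?_,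
          fun o ho => absurd ho (by omega), ?_⟩
        · intro o ho
          show wABJ m m J (0 + 0 + o) = 0
          unfold wABJ
          split_ifs <;> first | rfl | (exfalso; omega)
        · intro o ho
          show wABJ m m J (0 + 0 + m + 0 + o) = 1
          unfold wABJ
          split_ifs <;> first | rfl | (exfalso; omega)
      | 1 =>
        show infixSeg γ (2 * m) (2 * m + J + 2 * (0 + 1)) ∈ W15
        rw [mem_W15_iff _ _ _ (by omega)]
        refine ⟨1, J, 0, by omega, by omega, ?_, ?_, fun o ho => absurd ho (by omega), ?_⟩
        · intro o ho
          show wABJ m m J (2 * m + o) = 2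
          unfold wABJ
          split_ifs <;> first | rfl | (exfalso; omega)
        · intro o ho
          have ho0 : o = 0 := by omega
          subst ho0
          show wABJ m m J (2 * m + J + 0) = 0
          unfold wABJ
          split_ifs <;> first | rfl | (exfalso; omega)
        · intro o ho
          have ho0 : o = 0 := by omega
          subst ho0
          show wABJ m m J (2 * m + J + 1 + 0 + 0) = 1
          unfold wABJ
          split_ifs <;> first | rfl | (exfalso; omega)
      | (i + 2) =>
        show infixSeg γ (2 * m + J + 2 * (i + 1)) (2 * m + J + 2 * (i + 1 + 1)) ∈ W15
        rw [mem_W15_iff _ _ _ (by omega)]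
        refine ⟨1, 0, 0, by omega, by omega, fun o ho => absurd ho (by omega), ?_,
          fun o ho => absurd ho (by omega), ?_⟩
        · intro o ho
          have ho0 : o = 0 := by omega
          subst ho0
          show wABJ m m J (2 * m + J + 2 * (i + 1) + 0 + 0 + 0) = 0
          unfold wABJ
          split_ifs <;> first | rfl | (exfalso; omega)
        · intro o ho
          have ho0 : o = 0 := by omega
          subst ho0
          show wABJ m m J (2 * m + J + 2 * (i + 1) + 0 + 0 + 1 + 0 + 0) = 1
          unfold wABJ
          split_ifs <;> first | rfl | (exfalso; omega)
  have hSRAγ : A.StrongResetAccept γ := (Set.ext_iff.mp hL γ).mp (Or.inl hγmem)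
  obtain ⟨hInfγ, hSegγ⟩ := hSRAγ
  -- β is accepted
  have haccT' : A.acc (A.stateAt β (n + m + J)) := by
    rw [sβα _ le_rfl, ← hTval]
    exact haccT
  have hSRAβ : A.StrongResetAccept β := by
    constructor
    · intro N
      obtain ⟨i, hi, h1i, hacc⟩ := hInfγ (N + (m + m + J))
      refine ⟨n + m + J + (i - (m + m + J)), by omega, by omega, ?_⟩
      rw [s5, show m + m + J + (i - (m + m + J)) = i by omega]
      exact hacc
    · intro x y hxy hx hy hbet
      rcases Nat.lt_or_ge (n + m + J) y with hcase1 | hcase1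
      · rcases Nat.lt_or_ge x (n + m + J) with hcase2 | hcase2
        · -- straddling: impossible
          exact absurd haccT' (hbet (n + m + J) (by omega) (by omega))
        · -- transfer to γ
          have key := hSegγ (m + m + J + (x - (n + m + J))) (m + m + J + (y - (n + m + J)))
            (by omega) ?_ ?_ ?_
          · rw [show x = n + m + J + (x - (n + m + J)) by omega,
              show y = n + m + J + (y - (n + m + J)) by omega,
              A.vecSum_shift st5]
            exact key
          · refine Or.inr ⟨by omega, ?_⟩
            rcases hx with h0 | ⟨_, haccx⟩
            · omega
            · rw [← s5, show n + m + J + (x - (n + m + J)) = x by omega]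
              exact haccx
          · rw [← s5, show n + m + J + (y - (n + m + J)) = y by omega]
            exact hy
          · intro j hj1 hj2
            intro hcc
            refine hbet (n + m + J + (j - (m + m + J))) (by omega) (by omega) ?_
            rw [s5, show m + m + J + (j - (m + m + J)) = j by omega]
            exact hcc
      · -- transfer to α
        have key := hSegα x y hxy ?_ ?_ ?_
        · rw [A.vecSum_congr hcase1 stβα]
          exact key
        · rcases hx with h0 | ⟨h1x, haccx⟩
          · exact Or.inl h0
          · exact Or.inr ⟨h1x, by rw [← sβα x (by omega)]; exact haccx⟩
        · rw [← sβα y (by omega)]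
          exact hy
        · intro j hj1 hj2
          rw [← sβα j (by omega)]
          exact hbet j hj1 hj2
  have hβmem : β ∈ omegaPow W15 ∪ LcInf := (Set.ext_iff.mp hL β).mpr hSRAβ
  rcases hβmem with h | h
  · exact wABJ_not_L hm hmn hJ h
  · exact wABJ_not_LcInf n m J h

lemma not_union_recog : ¬ DetStrongResetRecog (omegaPow W15 ∪ LcInf) := by
  rintro ⟨d, Q, hQ, A, hC, hL⟩
  obtain ⟨x, y, hne, heq⟩ :=
    Finite.exists_ne_map_eq_of_infinite (fun i : ℕ => A.stateAt (fun _ => (0 : Fin 3)) (i + 1))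
  rcases hne.lt_or_gt with h | h
  · exact not_union_core A hL (x + 1) (y + 1) (by omega) (by omega) heq
  · exact not_union_core A hL (y + 1) (x + 1) (by omega) (by omega) heq.symm

end NotClosed

/-- `{c*aⁿc*bⁿ | n > 0}^ω` and `L_{c=∞}` are deterministic strong reset PA
recognizable, but their union is not, so the class is not closed under union. -/
theorem detStrongReset_not_closed_union :
    DetStrongResetRecog (omegaPow W15) ∧ DetStrongResetRecog LcInf ∧
    ¬ DetStrongResetRecog (omegaPow W15 ∪ LcInf) := by
  exact ⟨l15_recog, lc_recog, not_union_recog⟩
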